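/- arXiv:2108.04591 — 8 statements merged into one kernel-verified Lean document; each statement's English description precedes it below -/
import Mathlib

section
/- Let L ≥ 0, γ > 0, λ ∈ (0,1), and S ≥ 0. Suppose φ : ℝ → ℝ satisfies φ'(t) = −2Lφ(t) − γ(φ(t)² + 1) for every t ∈ [0,S], φ(0) = 1/λ, and φ(t) ≥ λ for all t ∈ [0,S]. Then S ≤ (1/λ − λ)/γ. In particular, the first time at which such a solution reaches the value λ is at most (1/λ − λ)/γ. -/
/-- If `φ` solves the Riccati equation `φ' = -2Lφ - γ(φ² + 1)` on `[0, S]`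
with `L ≥ 0`, `γ > 0`, `λ ∈ (0,1)`, `φ 0 = 1/λ` and `φ ≥ λ` on `[0, S]`, then
`S ≤ (1/λ - λ)/γ`. -/
theorem riccati_reach_time_upper_bound
    (L γ lam S : ℝ) (hL : 0 ≤ L) (hγ : 0 < γ) (hlam : lam ∈ Set.Ioo (0 : ℝ) 1)
    (hS : 0 ≤ S) (φ : ℝ → ℝ)
    (hode : ∀ t ∈ Set.Icc (0 : ℝ) S,
      HasDerivAt φ (-2 * L * φ t - γ * ((φ t) ^ 2 + 1)) t)
    (hinit : φ 0 = 1 / lam)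
    (hlow : ∀ t ∈ Set.Icc (0 : ℝ) S, lam ≤ φ t) :
    S ≤ (1 / lam - lam) / γ := by
  obtain ⟨hlam0, hlam1⟩ := hlam
  set g : ℝ → ℝ := fun t => φ t + γ * t with hg
  have hg' : ∀ t ∈ Set.Icc (0 : ℝ) S,
      HasDerivAt g (-2 * L * φ t - γ * ((φ t) ^ 2 + 1) + γ) t := by
    intro t ht
    exact (hode t ht).add ((hasDerivAt_id t).const_mul γ |>.congr_deriv (by ring))
  have hanti : AntitoneOn g (Set.Icc 0 S) := by
    apply antitoneOn_of_deriv_nonpos (convex_Icc 0 S)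
    · exact fun t ht => ((hg' t ht).continuousAt).continuousWithinAt
    · intro t ht
      rw [interior_Icc] at ht
      exact ((hg' t (Set.mem_Icc_of_Ioo ht)).differentiableAt).differentiableWithinAt
    · intro t ht
      rw [interior_Icc] at ht
      have ht' : t ∈ Set.Icc (0:ℝ) S := Set.mem_Icc_of_Ioo ht
      rw [((hg' t ht').deriv)]
      have h1 : 0 ≤ φ t := le_trans hlam0.le (hlow t ht')
      nlinarith [sq_nonneg (φ t)]
  have key : g S ≤ g 0 := hanti (Set.left_mem_Icc.2 hS) (Set.right_mem_Icc.2 hS) hS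
  have hφS : lam ≤ φ S := hlow S (Set.right_mem_Icc.2 hS)
  have : lam + γ * S ≤ 1 / lam := by
    simp only [hg, hinit, mul_zero, add_zero] at key
    linarith
  rw [le_div_iff₀ hγ]
  linarith
end

section
/- Let L ≥ 0, γ > 0, λ ∈ (0,1), and T > 0. Suppose ψ : ℝ → ℝ satisfies ψ'(t) = −2Lψ(t) − γ(ψ(t)² + 1) for every t ∈ [0,T], with ψ(0) = 1/λ and ψ(T) = λ. Define φ : ℝ → ℝ by φ(τ) = ψ(τ) for τ ∈ [0,T] and φ(τ) = λ for τ > T. Then φ(τ) ∈ [λ, 1/λ] for all τ ≥ 0, and φ(τ) = λ for all τ ≥ T. -/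
/-- Let `ψ` solve the Riccati equation `φ' = -2Lφ - γ(φ² + 1)` on `[0, T]`
with `ψ 0 = 1/λ` and `ψ T = λ`, and let `φ` agree with `ψ` on `[0, T]` and equal `λ`
after `T`. Then `φ τ ∈ [λ, 1/λ]` for all `τ ≥ 0` and `φ τ = λ` for all `τ ≥ T`
(Proposition 3 of the paper). -/
theorem riccati_extended_clock_bounds
    (L γ lam T : ℝ) (hL : 0 ≤ L) (hγ : 0 < γ) (hlam : lam ∈ Set.Ioo (0 : ℝ) 1)
    (hT : 0 < T) (ψ φ : ℝ → ℝ)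
    (hode : ∀ t ∈ Set.Icc (0 : ℝ) T,
      HasDerivAt ψ (-2 * L * ψ t - γ * ((ψ t) ^ 2 + 1)) t)
    (hinit : ψ 0 = 1 / lam) (hfinal : ψ T = lam)
    (hφ₁ : ∀ τ ∈ Set.Icc (0 : ℝ) T, φ τ = ψ τ)
    (hφ₂ : ∀ τ : ℝ, T < τ → φ τ = lam) :
    (∀ τ : ℝ, 0 ≤ τ → φ τ ∈ Set.Icc lam (1 / lam)) ∧
      (∀ τ : ℝ, T ≤ τ → φ τ = lam) := by
  obtain ⟨hlam0, hlam1⟩ := hlam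
  have hlaminv : 1 ≤ 1 / lam := by
    rw [le_div_iff₀ hlam0]; linarith
  have hψcont : ContinuousOn ψ (Set.Icc 0 T) := fun t ht =>
    (hode t ht).continuousAt.continuousWithinAt
  -- lower bound: ψ ≥ lam on [0, T]
  have hlow : ∀ t ∈ Set.Icc (0 : ℝ) T, lam ≤ ψ t := by
    by_contra h
    push_neg at h
    obtain ⟨t₀, ht₀, hlt⟩ := h
    set S := Set.Icc t₀ T ∩ ψ ⁻¹' Set.Ici lam with hSdef
    have hTS : T ∈ S := ⟨⟨ht₀.2, le_refl T⟩, by simp [hfinal]⟩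
    have hSclosed : IsClosed S :=
      (hψcont.mono (Set.Icc_subset_Icc ht₀.1 le_rfl)).preimage_isClosed_of_isClosed
        isClosed_Icc isClosed_Ici
    have hbdd : BddBelow S := ⟨t₀, fun x hx => hx.1.1⟩
    set s := sInf S with hs
    have hsS : s ∈ S := hSclosed.csInf_mem ⟨T, hTS⟩ hbdd
    have hψs : lam ≤ ψ s := hsS.2
    have ht₀s : t₀ < s := by
      rcases lt_or_eq_of_le hsS.1.1 with h' | h'
      · exact h'
      · exfalso; rw [← h'] at hψs; linarith
    have hsIcc : s ∈ Set.Icc (0 : ℝ) T := ⟨le_trans ht₀.1 hsS.1.1, hsS.1.2⟩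
    have hd := hode s hsIcc
    have hdneg : -2 * L * ψ s - γ * ((ψ s) ^ 2 + 1) < 0 := by
      nlinarith [sq_nonneg (ψ s)]
    have hslope := hasDerivAt_iff_tendsto_slope.mp hd
    have htsub : Filter.Tendsto (slope ψ s) (nhdsWithin s (Set.Iio s))
        (nhds (-2 * L * ψ s - γ * ((ψ s) ^ 2 + 1))) :=
      hslope.mono_left (nhdsWithin_mono s (fun x hx => ne_of_lt hx))
    have hev : ∀ᶠ t in nhdsWithin s (Set.Iio s), 0 ≤ slope ψ s t := by
      filter_upwards [Ioo_mem_nhdsLT ht₀s] with t ht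
      have htnotS : t ∉ S := fun hmem => absurd (csInf_le hbdd hmem) (not_le.mpr ht.2)
      have htIcc : t ∈ Set.Icc t₀ T := ⟨le_of_lt ht.1, le_trans (le_of_lt ht.2) hsS.1.2⟩
      have hψt : ψ t < lam := by
        by_contra hc
        exact htnotS ⟨htIcc, le_of_not_gt hc⟩
      have hnum : ψ t - ψ s < 0 := by linarith
      have hden : t - s < 0 := by linarith [ht.2]
      have : 0 < (ψ t - ψ s) / (t - s) := div_pos_of_neg_of_neg hnum hden
      rw [slope_def_field]
      exact le_of_lt this
    have h0led : 0 ≤ -2 * L * ψ s - γ * ((ψ s) ^ 2 + 1) :=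
      ge_of_tendsto htsub hev
    linarith
  -- upper bound: ψ ≤ 1/lam on [0, T]
  have hhigh : ∀ t ∈ Set.Icc (0 : ℝ) T, ψ t ≤ 1 / lam := by
    by_contra h
    push_neg at h
    obtain ⟨t₁, ht₁, hgt⟩ := h
    set S := Set.Icc (0 : ℝ) t₁ ∩ ψ ⁻¹' Set.Iic (1 / lam) with hSdef
    have h0S : (0 : ℝ) ∈ S := ⟨⟨le_rfl, ht₁.1⟩, by simp [hinit]⟩
    have hSclosed : IsClosed S :=
      (hψcont.mono (Set.Icc_subset_Icc le_rfl ht₁.2)).preimage_isClosed_of_isClosed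
        isClosed_Icc isClosed_Iic
    have hbdd : BddAbove S := ⟨t₁, fun x hx => hx.1.2⟩
    set s := sSup S with hs
    have hsS : s ∈ S := hSclosed.csSup_mem ⟨0, h0S⟩ hbdd
    have hψs : ψ s ≤ 1 / lam := hsS.2
    have hst₁ : s < t₁ := by
      rcases lt_or_eq_of_le hsS.1.2 with h' | h'
      · exact h'
      · exfalso; rw [h'] at hψs; linarith
    have hsIcc : s ∈ Set.Icc (0 : ℝ) T := ⟨hsS.1.1, le_trans hsS.1.2 ht₁.2⟩
    have hψslow : lam ≤ ψ s := hlow s hsIcc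
    have hd := hode s hsIcc
    have hdneg : -2 * L * ψ s - γ * ((ψ s) ^ 2 + 1) < 0 := by
      nlinarith [sq_nonneg (ψ s)]
    have hslope := hasDerivAt_iff_tendsto_slope.mp hd
    have htsub : Filter.Tendsto (slope ψ s) (nhdsWithin s (Set.Ioi s))
        (nhds (-2 * L * ψ s - γ * ((ψ s) ^ 2 + 1))) :=
      hslope.mono_left (nhdsWithin_mono s (fun x hx => ne_of_gt hx))
    have hev : ∀ᶠ t in nhdsWithin s (Set.Ioi s), 0 ≤ slope ψ s t := by
      filter_upwards [Ioo_mem_nhdsGT hst₁] with t ht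
      have htnotS : t ∉ S := fun hmem => absurd (le_csSup hbdd hmem) (not_le.mpr ht.1)
      have htIcc : t ∈ Set.Icc (0 : ℝ) t₁ :=
        ⟨le_trans hsS.1.1 (le_of_lt ht.1), le_of_lt ht.2⟩
      have hψt : 1 / lam < ψ t := by
        by_contra hc
        exact htnotS ⟨htIcc, le_of_not_gt hc⟩
      have hnum : 0 < ψ t - ψ s := by linarith
      have hden : 0 < t - s := by linarith [ht.1]
      have : 0 < (ψ t - ψ s) / (t - s) := div_pos hnum hden
      rw [slope_def_field]
      exact le_of_lt this
    have h0led : 0 ≤ -2 * L * ψ s - γ * ((ψ s) ^ 2 + 1) :=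
      ge_of_tendsto htsub hev
    linarith
  constructor
  · intro τ hτ
    rcases le_or_gt τ T with hle | hgt
    · have hmem : τ ∈ Set.Icc (0 : ℝ) T := ⟨hτ, hle⟩
      rw [hφ₁ τ hmem]
      exact ⟨hlow τ hmem, hhigh τ hmem⟩
    · rw [hφ₂ τ hgt]
      exact ⟨le_rfl, le_trans (le_of_lt hlam1) hlaminv⟩
  · intro τ hτ
    rcases lt_or_eq_of_le hτ with h' | h'
    · exact hφ₂ τ h'
    · rw [← h', hφ₁ T ⟨le_of_lt hT, le_rfl⟩, hfinal]
end

section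
/- Let L > 0 and λ ∈ (0,1), and set T = (1/L)·(1−λ)/(1+λ). Suppose φ : ℝ → ℝ satisfies φ'(t) = −2Lφ(t) − L(φ(t)² + 1) for every t ∈ [0,T] and φ(0) = 1/λ. Then φ(T) = λ. -/
/-!
For `γ = L` the Riccati equation reads `φ' = -L (φ + 1)²`, so `u = φ + 1` satisfies `u' = -L u²`
and `1 / u` grows linearly with slope `L`; from `1 / u 0 = λ / (1 + λ)` one gets
`1 / u T = 1 / (1 + λ)`, i.e. `φ T = λ`. To avoid dividing by `u` before knowing it does not
vanish, we use instead that `F t = u t * (λ / (1 + λ) + L t) - 1` solves the linear equation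
`F' = -L u F` with `F 0 = 0`, hence vanishes identically by Grönwall's inequality.
-/

open Set

theorem eqOn_zero_of_hasDerivWithinAt_mul_self {F g : ℝ → ℝ} {a b : ℝ}
    (hF : ContinuousOn F (Icc a b)) (hg : ContinuousOn g (Icc a b))
    (hderiv : ∀ t ∈ Ico a b, HasDerivWithinAt F (g t * F t) (Ici t) t) (ha : F a = 0) :
    EqOn F 0 (Icc a b) := by
  obtain ⟨K, hK⟩ := isCompact_Icc.exists_bound_of_continuousOn hg
  refine eq_zero_of_abs_deriv_le_mul_abs_self_of_eq_zero_right (K := K) hF hderiv ha fun t ht => ?_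
  rw [norm_mul]
  exact mul_le_mul_of_nonneg_right (hK t (Ico_subset_Icc_self ht)) (norm_nonneg _)

theorem hasDerivAt_mul_linear_sub_one_of_hasDerivAt_neg_mul_sq {u : ℝ → ℝ} {L c t : ℝ}
    (hu : HasDerivAt u (-L * u t ^ 2) t) :
    HasDerivAt (fun s => u s * (c + L * s) - 1) (-L * u t * (u t * (c + L * t) - 1)) t := by
  have hlin : HasDerivAt (fun s => c + L * s) L t := by
    simpa using ((hasDerivAt_id t).const_mul L).const_add c
  exact ((hu.mul hlin).sub_const 1).congr_deriv (by ring)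

/-- In the case `γ = L`, with `T = (1/L)·(1-λ)/(1+λ)`, a solution of
`φ' = -2Lφ - L(φ² + 1)` on `[0, T]` with `φ 0 = 1/λ` satisfies `φ T = λ`. -/
theorem riccati_miet_formula_eq_case
    (L lam : ℝ) (hL : 0 < L) (hlam : lam ∈ Set.Ioo (0 : ℝ) 1)
    (T : ℝ) (hTdef : T = (1 / L) * ((1 - lam) / (1 + lam)))
    (φ : ℝ → ℝ)
    (hode : ∀ t ∈ Set.Icc (0 : ℝ) T,
      HasDerivAt φ (-2 * L * φ t - L * ((φ t) ^ 2 + 1)) t)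
    (hinit : φ 0 = 1 / lam) :
    φ T = lam := by
  obtain ⟨hlam0, hlam1⟩ := hlam
  have hT : 0 ≤ T := by
    rw [hTdef]
    exact mul_nonneg (by positivity) (div_nonneg (by linarith) (by linarith))
  set F : ℝ → ℝ := fun s => (φ s + 1) * (lam / (1 + lam) + L * s) - 1
  have hF : ∀ t ∈ Icc 0 T, HasDerivAt F (-L * (φ t + 1) * F t) t := fun t ht =>
    hasDerivAt_mul_linear_sub_one_of_hasDerivAt_neg_mul_sq <|
      ((hode t ht).add_const 1).congr_deriv (by ring)
  have hFc : ContinuousOn F (Icc 0 T) := fun t ht => (hF t ht).continuousAt.continuousWithinAt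
  have hφc : ContinuousOn φ (Icc 0 T) := fun t ht =>
    (hode t ht).continuousAt.continuousWithinAt
  have hF0 : F 0 = 0 := by
    simp only [F, hinit]
    field_simp
    ring
  have hFT : F T = 0 :=
    eqOn_zero_of_hasDerivWithinAt_mul_self hFc (by fun_prop)
      (fun t ht => (hF t (Ico_subset_Icc_self ht)).hasDerivWithinAt) hF0 ⟨hT, le_rfl⟩
  have hlinT : lam / (1 + lam) + L * T = 1 / (1 + lam) := by
    rw [hTdef]
    field_simp
    ring
  simp only [F, hlinT] at hFT
  field_simp at hFT
  linarith
end

section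
/- Let 0 < L < γ and λ ∈ (0,1). Set r = √((γ/L)² − 1) and T = (1/(L·r))·arctan( r(1−λ) / ( 2·(λ/(1+λ))·(γ/L − 1) + 1 + λ ) ). Suppose φ : ℝ → ℝ satisfies φ'(t) = −2Lφ(t) − γ(φ(t)² + 1) for every t ∈ [0,T] and φ(0) = 1/λ. Then φ(T) = λ. -/
/-!
Along a solution of `φ' = -2Lφ - γ(φ² + 1)` with `c = √(γ² - L²)`, the clock
`arctan ((γφ + L) / c)` decreases at the constant rate `c`, since
`c² + (γφ + L)² = γ(γφ² + 2Lφ + γ)`. Hence the time to go from `1/λ` to `λ` is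
`(arctan A - arctan B) / c` with `A = (γ/λ + L)/c`, `B = (γλ + L)/c`, and the subtraction
formula for `arctan` turns this into the closed form, as `c = L r` and
`(A - B) / (1 + AB) = c(1 - λ²) / (2γλ + L(1 + λ²)) = r(1 - λ) / (2(λ/(1+λ))(γ/L - 1) + 1 + λ)`.
-/

open Real Set

theorem eq_add_mul_sub_of_hasDerivAt_const {u : ℝ → ℝ} {a b c : ℝ} (hab : a ≤ b)
    (hu : ∀ t ∈ Icc a b, HasDerivAt u c t) : u b = u a + c * (b - a) := by
  rcases hab.eq_or_lt with rfl | hlt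
  · simp
  obtain ⟨t, -, hslope⟩ := exists_hasDerivAt_eq_slope u (fun _ => c) hlt
    (fun t ht => (hu t ht).continuousAt.continuousWithinAt)
    (fun t ht => hu t (Ioo_subset_Icc_self ht))
  rw [hslope, div_mul_cancel₀ _ (sub_ne_zero.mpr hlt.ne')]
  ring

theorem Real.arctan_sub_arctan {x y : ℝ} (h : -1 < x * y) :
    arctan x - arctan y = arctan ((x - y) / (1 + x * y)) := by
  rw [sub_eq_add_neg, ← arctan_neg, arctan_add (by linarith)]
  ring_nf

theorem hasDerivAt_arctan_riccati_clock {L γ c t : ℝ} {φ : ℝ → ℝ} (hc : c ≠ 0)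
    (hc2 : c ^ 2 = γ ^ 2 - L ^ 2)
    (hφ : HasDerivAt φ (-2 * L * φ t - γ * (φ t ^ 2 + 1)) t) :
    HasDerivAt (fun s => arctan ((γ * φ s + L) / c)) (-c) t := by
  convert (((hφ.const_mul γ).add_const L).div_const c).arctan using 1
  have hden : 0 < c ^ 2 + (γ * φ t + L) ^ 2 := by positivity
  field_simp
  linear_combination -hc2

theorem arctan_riccati_clock_eq {L γ c T : ℝ} {φ : ℝ → ℝ} (hc : c ≠ 0)
    (hc2 : c ^ 2 = γ ^ 2 - L ^ 2) (hT : 0 ≤ T)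
    (hφ : ∀ t ∈ Icc 0 T, HasDerivAt φ (-2 * L * φ t - γ * (φ t ^ 2 + 1)) t) :
    arctan ((γ * φ T + L) / c) = arctan ((γ * φ 0 + L) / c) - c * T := by
  rw [eq_add_mul_sub_of_hasDerivAt_const hT fun t ht =>
    hasDerivAt_arctan_riccati_clock hc hc2 (hφ t ht)]
  ring

theorem arctan_sub_arctan_riccati_endpoints {L γ c lam : ℝ} (hL : 0 < L) (hγ : 0 < γ)
    (hlam : 0 < lam) (hc : c ≠ 0) (hc2 : c ^ 2 = γ ^ 2 - L ^ 2) :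
    arctan ((γ * (1 / lam) + L) / c) - arctan ((γ * lam + L) / c) =
      arctan (c * (1 - lam ^ 2) / (2 * γ * lam + L * (1 + lam ^ 2))) := by
  have hprod : 0 < (γ * (1 / lam) + L) / c * ((γ * lam + L) / c) := by
    rw [div_mul_div_comm]
    exact div_pos (by positivity) (mul_self_pos.mpr hc)
  rw [arctan_sub_arctan (by linarith)]
  congr 1
  have hE : 0 < 2 * γ * lam + L * (1 + lam ^ 2) := by positivity
  field_simp
  linear_combination (-(lam * (1 - lam ^ 2))) * hc2

theorem miet_arctan_arg_eq {L γ r lam : ℝ} (hL : 0 < L) (hγ : 0 < γ) (hlam : 0 < lam) :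
    r * (1 - lam) / (2 * (lam / (1 + lam)) * (γ / L - 1) + 1 + lam) =
      L * r * (1 - lam ^ 2) / (2 * γ * lam + L * (1 + lam ^ 2)) := by
  have hE : 0 < 2 * γ * lam + L * (1 + lam ^ 2) := by positivity
  have hD : 2 * (lam / (1 + lam)) * (γ / L - 1) + 1 + lam =
      (2 * γ * lam + L * (1 + lam ^ 2)) / (L * (1 + lam)) := by
    field_simp
    ring
  rw [hD]
  field_simp
  ring

/-- In the case `γ > L`, with `r = √((γ/L)² - 1)` and
`T = (1/(L·r))·arctan(r(1-λ) / (2(λ/(1+λ))(γ/L - 1) + 1 + λ))`, a solution of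
`φ' = -2Lφ - γ(φ² + 1)` on `[0, T]` with `φ 0 = 1/λ` satisfies `φ T = λ`. -/
theorem riccati_miet_formula_gt_case
    (L γ lam : ℝ) (hL : 0 < L) (hLγ : L < γ) (hlam : lam ∈ Set.Ioo (0 : ℝ) 1)
    (r T : ℝ)
    (hr : r = Real.sqrt ((γ / L) ^ 2 - 1))
    (hTdef : T = (1 / (L * r)) *
      Real.arctan (r * (1 - lam) / (2 * (lam / (1 + lam)) * (γ / L - 1) + 1 + lam)))
    (φ : ℝ → ℝ)
    (hode : ∀ t ∈ Set.Icc (0 : ℝ) T,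
      HasDerivAt φ (-2 * L * φ t - γ * ((φ t) ^ 2 + 1)) t)
    (hinit : φ 0 = 1 / lam) :
    φ T = lam := by
  obtain ⟨hlam0, hlam1⟩ := hlam
  have hγ : 0 < γ := hL.trans hLγ
  have hγL : 1 < γ / L := (one_lt_div hL).mpr hLγ
  have hr0 : 0 < r := hr ▸ sqrt_pos.mpr (by nlinarith)
  have hc2 : (L * r) ^ 2 = γ ^ 2 - L ^ 2 := by
    rw [mul_pow, hr, sq_sqrt (by nlinarith)]
    field_simp
  have hc : 0 < L * r := mul_pos hL hr0
  have hcT : L * r * T = arctan (L * r * (1 - lam ^ 2) / (2 * γ * lam + L * (1 + lam ^ 2))) := by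
    rw [hTdef, miet_arctan_arg_eq hL hγ hlam0]
    field_simp
  have hT : 0 ≤ T := by
    have hlam2 : 0 < 1 - lam ^ 2 := by nlinarith
    have : 0 ≤ L * r * T := hcT ▸ arctan_nonneg.mpr (by positivity)
    exact nonneg_of_mul_nonneg_right this hc
  have hclock := arctan_riccati_clock_eq hc.ne' hc2 hT hode
  rw [hinit, hcT, ← arctan_sub_arctan_riccati_endpoints hL hγ hlam0 hc.ne' hc2,
    sub_sub_cancel] at hclock
  have harg := arctan_injective hclock
  rw [div_left_inj' hc.ne', add_left_inj] at harg
  exact mul_left_cancel₀ hγ.ne' harg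
end

section
/- Let 0 < γ < L and λ ∈ (0,1). Set r = √(1 − (γ/L)²) and T = (1/(L·r))·artanh( r(1−λ) / ( 2·(λ/(1+λ))·(γ/L − 1) + 1 + λ ) ). Suppose φ : ℝ → ℝ satisfies φ'(t) = −2Lφ(t) − γ(φ(t)² + 1) for every t ∈ [0,T] and φ(0) = 1/λ. Then φ(T) = λ. -/
/-- The inverse hyperbolic tangent, `artanh x = ½ log((1+x)/(1-x))`,
well defined (as the inverse of `tanh`) for `x ∈ (-1, 1)`. -/
noncomputable def Real.artanhLog (x : ℝ) : ℝ := (1 / 2) * Real.log ((1 + x) / (1 - x))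

/-!
The right-hand side factors as `-γ (φ - a) (φ - b)` with `a = L(r - 1)/γ` and `b = -L(r + 1)/γ`,
real and distinct because `γ < L`. Along a solution the ratio `(φ - a)/(φ - b)` is multiplied by
`exp(-γ(a - b)t) = exp(-2Lrt)`; in cross-multiplied form the defect of this identity solves a
linear ODE with zero initial value, so it vanishes by Grönwall, and no division by `φ - b` is
needed. At `t = T` the factor is `(1 - X)/(1 + X)` for the artanh argument `X`, and a polynomial
identity modulo `r² = 1 - (γ/L)²` shows that `λ` has the same ratio as `φ T`; since
`x ↦ (x - a)/(x - b)` is injective, `φ T = λ`.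
-/

open Real Set

theorem eq_zero_of_hasDerivAt_smul_self_of_eq_zero {F : Type*} [NormedAddCommGroup F]
    [NormedSpace ℝ F] {E : ℝ → F} {g : ℝ → ℝ} {t₀ T : ℝ}
    (hg : ContinuousOn g (Icc t₀ T)) (hE : ∀ t ∈ Icc t₀ T, HasDerivAt E (g t • E t) t)
    (h₀ : E t₀ = 0) : ∀ t ∈ Icc t₀ T, E t = 0 := by
  obtain ⟨K, hK⟩ := isCompact_Icc.exists_bound_of_continuousOn hg
  refine eq_zero_of_abs_deriv_le_mul_abs_self_of_eq_zero_right (K := K)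
    (fun t ht => (hE t ht).continuousAt.continuousWithinAt)
    (fun t ht => (hE t (Ico_subset_Icc_self ht)).hasDerivWithinAt) h₀ fun t ht => ?_
  rw [norm_smul]
  exact mul_le_mul_of_nonneg_right (hK t (Ico_subset_Icc_self ht)) (norm_nonneg _)

theorem cross_ratio_mul_exp_eq_of_hasDerivAt {γ a b t₀ T : ℝ} {φ : ℝ → ℝ}
    (hφ : ∀ t ∈ Icc t₀ T, HasDerivAt φ (-γ * ((φ t - a) * (φ t - b))) t) :
    ∀ t ∈ Icc t₀ T, (φ t - a) * (φ t₀ - b) * exp (γ * (a - b) * (t - t₀)) =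
      (φ t₀ - a) * (φ t - b) := by
  have hφc : ContinuousOn φ (Icc t₀ T) := fun t ht => (hφ t ht).continuousAt.continuousWithinAt
  have hdefect := eq_zero_of_hasDerivAt_smul_self_of_eq_zero
    (E := fun t => (φ t - a) * (φ t₀ - b) * exp (γ * (a - b) * (t - t₀)) -
      (φ t₀ - a) * (φ t - b))
    (g := fun t => -γ * (φ t - a)) (continuousOn_const.mul (hφc.sub continuousOn_const))
    (fun t ht => ?_) (by simp)
  · exact fun t ht => sub_eq_zero.1 (hdefect t ht)
  · have hexp := (((hasDerivAt_id t).sub_const t₀).const_mul (γ * (a - b))).exp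
    refine ((((hφ t ht).sub_const a).mul_const (φ t₀ - b)).mul hexp).sub
      (((hφ t ht).sub_const b).const_mul (φ t₀ - a)) |>.congr_deriv ?_
    simp only [id, smul_eq_mul]
    ring

theorem eq_of_cross_ratio_eq {a b p D x y : ℝ} (hba : b < a) (hbp : b ≤ p) (hD : 1 ≤ D)
    (hx : (x - a) * (p - b) * D = (p - a) * (x - b))
    (hy : (y - a) * (p - b) * D = (p - a) * (y - b)) : x = y := by
  have hslope : 0 < (p - b) * D - (p - a) := by nlinarith
  have : (x - y) * ((p - b) * D - (p - a)) = 0 := by linear_combination hx - hy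
  simpa [sub_eq_zero, hslope.ne'] using this

theorem Real.exp_two_mul_artanhLog {x : ℝ} (hx : x ∈ Ioo (-1) 1) :
    exp (2 * artanhLog x) = (1 + x) / (1 - x) := by
  rw [artanhLog, ← mul_assoc, mul_one_div_cancel two_ne_zero, one_mul,
    exp_log (div_pos (by linarith [hx.1]) (by linarith [hx.2]))]

theorem Real.artanhLog_nonneg {x : ℝ} (hx₀ : 0 ≤ x) (hx₁ : x < 1) : 0 ≤ artanhLog x :=
  mul_nonneg one_half_pos.le (log_nonneg ((one_le_div (by linarith)).2 (by linarith)))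

section Riccati

variable {L γ r lam : ℝ}

theorem riccati_rhs_eq_neg_mul_sub_mul_sub (hL : L ≠ 0) (hγ : γ ≠ 0)
    (hr : r ^ 2 = 1 - (γ / L) ^ 2) (x : ℝ) :
    -2 * L * x - γ * (x ^ 2 + 1) =
      -γ * ((x - L * (r - 1) / γ) * (x - L * (-r - 1) / γ)) := by
  field_simp at hr ⊢
  linear_combination (-1) * hr

theorem miet_arg_eq (hL : 0 < L) (hγ : 0 < γ) (hlam : 0 < lam) :
    r * (1 - lam) / (2 * (lam / (1 + lam)) * (γ / L - 1) + 1 + lam) =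
      L * r * (1 - lam ^ 2) / (L * (1 + lam ^ 2) + 2 * γ * lam) := by
  have hden : 2 * (lam / (1 + lam)) * (γ / L - 1) + 1 + lam =
      (L * (1 + lam ^ 2) + 2 * γ * lam) / (L * (1 + lam)) := by
    field_simp
    ring
  rw [hden, div_div_eq_mul_div]
  field_simp
  ring

theorem miet_arg_mem_Ico (hL : 0 < L) (hγ : 0 < γ) (hr₀ : 0 ≤ r) (hr₁ : r ≤ 1)
    (hlam₀ : 0 < lam) (hlam₁ : lam < 1) :
    L * r * (1 - lam ^ 2) / (L * (1 + lam ^ 2) + 2 * γ * lam) ∈ Ico 0 1 := by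
  have hden : 0 < L * (1 + lam ^ 2) + 2 * γ * lam := by positivity
  have hlam2 : 0 ≤ 1 - lam ^ 2 := by nlinarith
  refine ⟨div_nonneg (by positivity) hden.le, (div_lt_one hden).2 ?_⟩
  nlinarith [mul_le_mul_of_nonneg_left hr₁ (mul_nonneg hL.le hlam2), mul_pos hγ hlam₀,
    mul_pos hL (pow_pos hlam₀ 2)]

theorem miet_cross_ratio_mul_eq (hL : 0 < L) (hγ : 0 < γ) (hr : r ^ 2 = 1 - (γ / L) ^ 2)
    (hlam : 0 < lam) {X : ℝ}
    (hX : X = L * r * (1 - lam ^ 2) / (L * (1 + lam ^ 2) + 2 * γ * lam)) :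
    (lam - L * (r - 1) / γ) * (1 / lam - L * (-r - 1) / γ) * (1 + X) =
      (1 / lam - L * (r - 1) / γ) * (lam - L * (-r - 1) / γ) * (1 - X) := by
  have hden : L * (1 + lam ^ 2) + 2 * γ * lam ≠ 0 := by positivity
  field_simp at hr
  subst hX
  field_simp
  linear_combination (-2 * L * r * lam * (1 - lam ^ 2)) * hr

end Riccati

/-- In the case `γ < L`, with `r = √(1 - (γ/L)²)` and
`T = (1/(L·r))·artanh(r(1-λ) / (2(λ/(1+λ))(γ/L - 1) + 1 + λ))`, a solution of
`φ' = -2Lφ - γ(φ² + 1)` on `[0, T]` with `φ 0 = 1/λ` satisfies `φ T = λ`. -/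
theorem riccati_miet_formula_lt_case
    (L γ lam : ℝ) (hγ : 0 < γ) (hγL : γ < L) (hlam : lam ∈ Set.Ioo (0 : ℝ) 1)
    (r T : ℝ)
    (hr : r = Real.sqrt (1 - (γ / L) ^ 2))
    (hTdef : T = (1 / (L * r)) *
      Real.artanhLog (r * (1 - lam) / (2 * (lam / (1 + lam)) * (γ / L - 1) + 1 + lam)))
    (φ : ℝ → ℝ)
    (hode : ∀ t ∈ Set.Icc (0 : ℝ) T,
      HasDerivAt φ (-2 * L * φ t - γ * ((φ t) ^ 2 + 1)) t)
    (hinit : φ 0 = 1 / lam) :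
    φ T = lam := by
  obtain ⟨hlam₀, hlam₁⟩ := hlam
  have hL : 0 < L := hγ.trans hγL
  have hs : (γ / L) ^ 2 < 1 := pow_lt_one₀ (by positivity) ((div_lt_one hL).2 hγL) two_ne_zero
  have hr₀ : 0 < r := hr ▸ sqrt_pos.2 (sub_pos.2 hs)
  have hr₁ : r ≤ 1 := hr ▸ sqrt_le_one.2 (by linarith [sq_nonneg (γ / L)])
  have hr2 : r ^ 2 = 1 - (γ / L) ^ 2 := hr ▸ sq_sqrt (sub_nonneg.2 hs.le)
  set a := L * (r - 1) / γ
  set b := L * (-r - 1) / γ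
  set X := r * (1 - lam) / (2 * (lam / (1 + lam)) * (γ / L - 1) + 1 + lam)
  have hX : X = L * r * (1 - lam ^ 2) / (L * (1 + lam ^ 2) + 2 * γ * lam) :=
    miet_arg_eq hL hγ hlam₀
  have hXmem : X ∈ Ico 0 1 := hX ▸ miet_arg_mem_Ico hL hγ hr₀.le hr₁ hlam₀ hlam₁
  have hT₀ : 0 ≤ T := hTdef ▸ mul_nonneg (by positivity) (artanhLog_nonneg hXmem.1 hXmem.2)
  have hexp : exp (γ * (a - b) * T) = (1 + X) / (1 - X) := by
    have hrate : γ * (a - b) = 2 * L * r := by simp only [a, b]; field_simp; ring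
    rw [hrate, hTdef, show 2 * L * r * (1 / (L * r) * artanhLog X) = 2 * artanhLog X by
      field_simp]
    exact exp_two_mul_artanhLog ⟨by linarith [hXmem.1], hXmem.2⟩
  have hφT := cross_ratio_mul_exp_eq_of_hasDerivAt (a := a) (b := b)
    (fun t ht => riccati_rhs_eq_neg_mul_sub_mul_sub hL.ne' hγ.ne' hr2 (φ t) ▸ hode t ht)
    T ⟨hT₀, le_rfl⟩
  rw [sub_zero, hinit, hexp] at hφT
  have hlamT : (lam - a) * (1 / lam - b) * ((1 + X) / (1 - X)) = (1 / lam - a) * (lam - b) := by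
    rw [mul_div_assoc', div_eq_iff (by linarith [hXmem.2])]
    exact miet_cross_ratio_mul_eq hL hγ hr2 hlam₀ hX
  have hba : b < a := div_lt_div_of_pos_right (by nlinarith) hγ
  have hb : b ≤ 1 / lam := (div_neg_of_neg_of_pos (by nlinarith) hγ).le.trans (by positivity)
  have hD : 1 ≤ (1 + X) / (1 - X) :=
    (one_le_div (by linarith [hXmem.2])).2 (by linarith [hXmem.1])
  exact eq_of_cross_ratio_eq hba hb hD hφT hlamT
end

section
/- Let 0 < γ < L and λ ∈ (0,1), and set r = √(1 − (γ/L)²). Then the quantity x = r(1−λ) / ( 2·(λ/(1+λ))·(γ/L − 1) + 1 + λ ) satisfies 0 < x < 1 (so that artanh(x) is well defined and positive), and consequently the minimum inter-event time τ_MIET = (1/(L·r))·artanh(x) is strictly positive. -/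
/-!
With `c = γ/L ∈ (0, 1)` the denominator `D = 2 (λ/(1+λ)) (c - 1) + 1 + λ` exceeds `1 - λ`
by `2λ(c + λ)/(1 + λ) > 0`, while `r = √(1 - c²) ∈ (0, 1]`. Hence `0 < r(1-λ) < D`, so the
argument of `artanh` lies in `(0, 1)`, where `artanh` is positive.
-/

open Set

namespace Real

theorem artanhLog_pos {x : ℝ} (hx : x ∈ Ioo (0 : ℝ) 1) : 0 < artanhLog x := by
  obtain ⟨hx0, hx1⟩ := hx
  have h1x : 0 < 1 - x := sub_pos.mpr hx1
  have hlog : 0 < log ((1 + x) / (1 - x)) :=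
    log_pos ((one_lt_div h1x).mpr (by linarith))
  unfold artanhLog
  positivity

theorem sqrt_one_sub_sq_pos {c : ℝ} (hc : |c| < 1) : 0 < √(1 - c ^ 2) := by
  have : c ^ 2 < 1 := (sq_lt_one_iff_abs_lt_one c).mpr hc
  exact sqrt_pos.mpr (sub_pos.mpr this)

end Real

namespace MIET

variable {r c lam : ℝ}

noncomputable def denom (c lam : ℝ) : ℝ := 2 * (lam / (1 + lam)) * (c - 1) + 1 + lam

/-- The argument of `artanh` in `τ_MIET`, written with `c = γ/L`. -/
noncomputable def arg (r c lam : ℝ) : ℝ := r * (1 - lam) / denom c lam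

theorem denom_sub_one_sub (hlam : 0 < lam) :
    denom c lam - (1 - lam) = 2 * lam * (c + lam) / (1 + lam) := by
  unfold denom
  field_simp
  ring

theorem one_sub_lt_denom (hlam : 0 < lam) (hc : -lam < c) : 1 - lam < denom c lam := by
  have hgap : 0 < 2 * lam * (c + lam) / (1 + lam) := by
    have : 0 < c + lam := by linarith
    positivity
  linarith [denom_sub_one_sub (c := c) hlam]

theorem arg_mem_Ioo (hr0 : 0 < r) (hr1 : r ≤ 1) (hlam : lam ∈ Ioo (0 : ℝ) 1) (hc : -lam < c) :
    arg r c lam ∈ Ioo (0 : ℝ) 1 := by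
  obtain ⟨hlam0, hlam1⟩ := hlam
  have h1lam : 0 < 1 - lam := sub_pos.mpr hlam1
  have hD : 1 - lam < denom c lam := one_sub_lt_denom hlam0 hc
  have hD0 : 0 < denom c lam := h1lam.trans hD
  refine ⟨div_pos (mul_pos hr0 h1lam) hD0, (div_lt_one hD0).mpr ?_⟩
  calc r * (1 - lam) ≤ 1 - lam := mul_le_of_le_one_left h1lam.le hr1
    _ < denom c lam := hD

end MIET

/-- For `0 < γ < L` and `λ ∈ (0,1)`, with `r = √(1 - (γ/L)²)`, the
argument `x = r(1-λ) / (2(λ/(1+λ))(γ/L - 1) + 1 + λ)` satisfies `0 < x < 1`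
(so `artanh x` is well defined and positive), and `τ_MIET = (1/(L·r))·artanh x > 0`. -/
theorem miet_positive_lt_case
    (L γ lam : ℝ) (hγ : 0 < γ) (hγL : γ < L) (hlam : lam ∈ Set.Ioo (0 : ℝ) 1)
    (r : ℝ) (hr : r = Real.sqrt (1 - (γ / L) ^ 2)) :
    (0 < r * (1 - lam) / (2 * (lam / (1 + lam)) * (γ / L - 1) + 1 + lam) ∧
      r * (1 - lam) / (2 * (lam / (1 + lam)) * (γ / L - 1) + 1 + lam) < 1) ∧
    0 < (1 / (L * r)) *
      Real.artanhLog (r * (1 - lam) / (2 * (lam / (1 + lam)) * (γ / L - 1) + 1 + lam)) := by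
  have hL : 0 < L := hγ.trans hγL
  have hc0 : 0 < γ / L := div_pos hγ hL
  have hc1 : |γ / L| < 1 := by rwa [abs_of_pos hc0, div_lt_one hL]
  have hr0 : 0 < r := hr ▸ Real.sqrt_one_sub_sq_pos hc1
  have hr1 : r ≤ 1 := hr ▸ Real.sqrt_le_one.mpr (sub_le_self 1 (sq_nonneg _))
  have hx : MIET.arg r (γ / L) lam ∈ Set.Ioo (0 : ℝ) 1 :=
    MIET.arg_mem_Ioo hr0 hr1 hlam (by linarith [hlam.1])
  have hτ : 0 < 1 / (L * r) := by positivity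
  exact ⟨hx, mul_pos hτ (Real.artanhLog_pos hx)⟩
end

section
/- Let 0 < L < γ and λ ∈ (0,1). Set r = √((γ/L)² − 1) and ψ₀ = arctan( (γ/λ + L) / (L·r) ). Define φ(t) = −L/γ + (L·r/γ)·tan(ψ₀ − L·r·t). Then φ(0) = 1/λ, and for every t such that ψ₀ − L·r·t ∈ (−π/2, π/2), φ has derivative −2Lφ(t) − γ(φ(t)² + 1) at t; i.e., φ is an explicit solution of the Riccati equation φ' = −2Lφ − γ(φ² + 1) with initial condition 1/λ in the case γ > L. -/
open Real

/-! Completing the square, `-2Lφ - γ(φ² + 1) = -γ (φ + L/γ)² - (γ² - L²)/γ`, turns the equation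
into `ψ' = -(ψ² + ω²)/γ` for `ψ = φ + L/γ` and `ω = √(γ² - L²)`, which `ψ = ω tan(ψ₀ - ω t)/γ`
solves because `tan' = 1 + tan²`. Since `L r = ω`, the phase `ψ₀` is chosen so that `φ 0 = 1/λ`. -/

theorem mul_sqrt_div_sq_sub_one {L : ℝ} (hL : 0 < L) (γ : ℝ) :
    L * √((γ / L) ^ 2 - 1) = √(γ ^ 2 - L ^ 2) := by
  have h : γ ^ 2 - L ^ 2 = L ^ 2 * ((γ / L) ^ 2 - 1) := by field_simp
  rw [h, sqrt_mul (sq_nonneg L), sqrt_sq hL.le]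

theorem hasDerivAt_tan_const_sub_mul {ψ₀ ω t : ℝ} (hcos : cos (ψ₀ - ω * t) ≠ 0) :
    HasDerivAt (fun s => tan (ψ₀ - ω * s)) (-ω * (1 + tan (ψ₀ - ω * t) ^ 2)) t := by
  have hinner : HasDerivAt (fun s => ψ₀ - ω * s) (-ω) t := by
    simpa using ((hasDerivAt_id t).const_mul ω).const_sub ψ₀
  refine ((hasDerivAt_tan hcos).comp t hinner).congr_deriv ?_
  rw [one_div, ← inv_one_add_tan_sq hcos, inv_inv, mul_comm]

theorem hasDerivAt_riccati_tan {φ : ℝ → ℝ} {L γ ω ψ₀ t : ℝ}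
    (hφ : ∀ s, φ s = -L / γ + ω / γ * tan (ψ₀ - ω * s)) (hγ : γ ≠ 0)
    (hω : ω ^ 2 = γ ^ 2 - L ^ 2) (hcos : cos (ψ₀ - ω * t) ≠ 0) :
    HasDerivAt φ (-2 * L * φ t - γ * (φ t ^ 2 + 1)) t := by
  rw [funext hφ]
  refine (((hasDerivAt_tan_const_sub_mul hcos).const_mul (ω / γ)).const_add (-L / γ)).congr_deriv ?_
  field_simp
  linear_combination -hω

theorem riccati_tan_arctan_zero {L γ ω : ℝ} (hγ : γ ≠ 0) (hω : ω ≠ 0) (lam : ℝ) :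
    -L / γ + ω / γ * tan (arctan ((γ / lam + L) / ω) - ω * 0) = 1 / lam := by
  rw [mul_zero, sub_zero, tan_arctan]
  field_simp
  ring

theorem riccati_explicit_solution_gt_case_general
    (L γ lam : ℝ) (hL : 0 < L) (hLγ : L < γ)
    (r ψ₀ : ℝ)
    (hr : r = Real.sqrt ((γ / L) ^ 2 - 1))
    (hψ₀ : ψ₀ = Real.arctan ((γ / lam + L) / (L * r)))
    (φ : ℝ → ℝ)
    (hφ : ∀ t : ℝ, φ t = -L / γ + (L * r / γ) * Real.tan (ψ₀ - L * r * t)) :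
    φ 0 = 1 / lam ∧
      ∀ t : ℝ, ψ₀ - L * r * t ∈ Set.Ioo (-(π / 2)) (π / 2) →
        HasDerivAt φ (-2 * L * φ t - γ * ((φ t) ^ 2 + 1)) t := by
  have hγ : γ ≠ 0 := (hL.trans hLγ).ne'
  have hLγ_sq : 0 < γ ^ 2 - L ^ 2 := by nlinarith
  have hω : L * r = √(γ ^ 2 - L ^ 2) := hr ▸ mul_sqrt_div_sq_sub_one hL γ
  have hω_sq : (L * r) ^ 2 = γ ^ 2 - L ^ 2 := by rw [hω, sq_sqrt hLγ_sq.le]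
  have hω_ne : L * r ≠ 0 := by rw [hω]; exact (sqrt_pos.2 hLγ_sq).ne'
  refine ⟨hφ 0 ▸ hψ₀ ▸ riccati_tan_arctan_zero hγ hω_ne lam, fun t ht => ?_⟩
  exact hasDerivAt_riccati_tan hφ hγ hω_sq (cos_pos_of_mem_Ioo ht).ne'

/-- In the case `γ > L`, with `r = √((γ/L)² - 1)` and
`ψ₀ = arctan((γ/λ + L)/(L·r))`, the function `φ t = -L/γ + (L·r/γ)·tan(ψ₀ - L·r·t)`
satisfies `φ 0 = 1/λ` and solves `φ' = -2Lφ - γ(φ² + 1)` at every `t` with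
`ψ₀ - L·r·t ∈ (-π/2, π/2)`. -/
theorem riccati_explicit_solution_gt_case
    (L γ lam : ℝ) (hL : 0 < L) (hLγ : L < γ) (hlam : lam ∈ Set.Ioo (0 : ℝ) 1)
    (r ψ₀ : ℝ)
    (hr : r = Real.sqrt ((γ / L) ^ 2 - 1))
    (hψ₀ : ψ₀ = Real.arctan ((γ / lam + L) / (L * r)))
    (φ : ℝ → ℝ)
    (hφ : ∀ t : ℝ, φ t = -L / γ + (L * r / γ) * Real.tan (ψ₀ - L * r * t)) :
    φ 0 = 1 / lam ∧
      ∀ t : ℝ, ψ₀ - L * r * t ∈ Set.Ioo (-(π / 2)) (π / 2) →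
        HasDerivAt φ (-2 * L * φ t - γ * ((φ t) ^ 2 + 1)) t :=
  riccati_explicit_solution_gt_case_general L γ lam hL hLγ r ψ₀ hr hψ₀ φ hφ
end

section
/- Let α : ℝ → ℝ be monotone (nondecreasing), let c ∈ ℝ, and let y : ℝ → ℝ be differentiable with y'(t) ≤ −α(y(t)) + c for all t ≥ 0. Suppose b ∈ ℝ satisfies α(b) > c and y(0) > b. Then y(t) ≤ b for all t ≥ (y(0) − b)/(α(b) − c); i.e., the trajectory enters the sublevel set {y ≤ b} in finite time bounded explicitly by (y(0) − b)/(α(b) − c), and remains in it thereafter. -/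
/-!
While `y > b`, monotonicity of `α` turns the differential inequality into `y' ≤ -(α b - c)`, so
`y` falls at a fixed positive rate and must reach the level `b` by time `(y 0 - b) / (α b - c)`.
Afterwards it cannot leave `{y ≤ b}`: at a crossing time `y = b` we would have `y' < 0`.
-/

open Set

section Sublevel

variable {y : ℝ → ℝ} {b : ℝ}

theorem exists_mem_Icc_le_of_deriv_le_neg (hy : Differentiable ℝ y) {a τ k : ℝ} (haτ : a ≤ τ)
    (hτ : y a - k * (τ - a) ≤ b) (hdecay : ∀ s ∈ Ico a τ, b < y s → deriv y s ≤ -k) :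
    ∃ s ∈ Icc a τ, y s ≤ b := by
  by_contra! habove
  have hline : y τ ≤ y a - k * (τ - a) :=
    image_le_of_deriv_right_le_deriv_boundary (B := fun s ↦ y a - k * (s - a)) (B' := fun _ ↦ -k)
      hy.continuous.continuousOn (fun s _ ↦ (hy s).hasDerivAt.hasDerivWithinAt) (by simp)
      (by fun_prop)
      (fun s _ ↦ by simpa using (((hasDerivAt_id s).sub_const a).const_mul k).const_sub (y a)
        |>.hasDerivWithinAt)
      (fun s hs ↦ hdecay s hs (habove s (Ico_subset_Icc_self hs))) ⟨haτ, le_rfl⟩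
  linarith [habove τ ⟨haτ, le_rfl⟩]

theorem le_of_le_of_deriv_neg_at_level (hy : Differentiable ℝ y) {t₀ t : ℝ} (ht : t₀ ≤ t)
    (h₀ : y t₀ ≤ b) (hlevel : ∀ s ∈ Ico t₀ t, y s = b → deriv y s < 0) : y t ≤ b :=
  image_le_of_deriv_right_lt_deriv_boundary' (B := fun _ ↦ b) hy.continuous.continuousOn
    (fun s _ ↦ (hy s).hasDerivAt.hasDerivWithinAt) h₀ continuousOn_const
    (fun s _ ↦ hasDerivWithinAt_const s _ b) hlevel ⟨ht, le_rfl⟩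

end Sublevel

/-- Comparison-type finite-time attractivity lemma. If `α` is monotone,
`y` is differentiable with `y' t ≤ -α (y t) + c` for all `t ≥ 0`, and `b` satisfies
`α b > c` and `y 0 > b`, then `y t ≤ b` for all `t ≥ (y 0 - b)/(α b - c)`: the
trajectory enters the sublevel set `{y ≤ b}` within this explicit time and stays there. -/
theorem sublevel_finite_time_attractive
    (α : ℝ → ℝ) (hα : Monotone α) (c : ℝ)
    (y : ℝ → ℝ) (hy : Differentiable ℝ y)
    (hdiff : ∀ t : ℝ, 0 ≤ t → deriv y t ≤ -α (y t) + c)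
    (b : ℝ) (hb : c < α b) (h0 : b < y 0) :
    ∀ t : ℝ, (y 0 - b) / (α b - c) ≤ t → y t ≤ b := by
  intro t ht
  have hk : 0 < α b - c := sub_pos.2 hb
  have hT : 0 ≤ (y 0 - b) / (α b - c) := div_nonneg (sub_pos.2 h0).le hk.le
  have hreach : y 0 - (α b - c) * ((y 0 - b) / (α b - c) - 0) ≤ b := by
    rw [sub_zero, mul_div_cancel₀ _ hk.ne', sub_sub_cancel]
  obtain ⟨s, ⟨hs₀, hsT⟩, hys⟩ := exists_mem_Icc_le_of_deriv_le_neg hy hT hreach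
    fun s hs hbs ↦ by linarith [hdiff s hs.1, hα hbs.le]
  refine le_of_le_of_deriv_neg_at_level hy (hsT.trans ht) hys fun s hs hys ↦ ?_
  have := hdiff s (hs₀.trans hs.1)
  rw [hys] at this
  linarith
end
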